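/- arXiv:1407.2486 — 3 statements merged into one kernel-verified Lean document; each statement's English description precedes it below -/
import Mathlib

section
/- Let p : E → B be a functor and let (1 < p) : (1 < E) → (1 < B) be the induced functor on join categories obtained by freely adjoining an initial object to E and B. Then p has a left adjoint if and only if (1 < p) has a left adjoint. -/
open CategoryTheory Limits

universe v₁ v₂ u₁ u₂

namespace WithInitialAdjAux

variable {E : Type u₁} [Category.{v₁} E] {B : Type u₂} [Category.{v₂} B] (p : E ⥤ B)

/-- The comparison functor from `StructuredArrow b p` to
`StructuredArrow (of b) (WithInitial.map p)`. -/
@[simps]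
def toStr (b : B) :
    StructuredArrow b p ⥤ StructuredArrow (WithInitial.of b) (WithInitial.map p) where
  obj X := StructuredArrow.mk
    (show WithInitial.of b ⟶ (WithInitial.map p).obj (WithInitial.of X.right) from X.hom)
  map {X Y} g := StructuredArrow.homMk
    (show WithInitial.of X.right ⟶ WithInitial.of Y.right from g.right)
    (by
      have := StructuredArrow.w g
      exact this)

instance (b : B) : (toStr p b).Full where
  map_surjective {X Y} g := by
    refine ⟨StructuredArrow.homMk (WithInitial.down g.right) ?_, ?_⟩
    · exact StructuredArrow.w g
    · apply StructuredArrow.ext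
      rfl

instance (b : B) : (toStr p b).Faithful where
  map_injective {X Y} g g' h := by
    apply StructuredArrow.ext
    have h' := congrArg CommaMorphism.right h
    exact h'

instance (b : B) : (toStr p b).EssSurj where
  mem_essImage Y := by
    obtain ⟨⟨⟩, y, f⟩ := Y
    · cases y with
      | star => exact (f : PEmpty).elim
      | of e =>
        exact ⟨StructuredArrow.mk (show b ⟶ p.obj e from f),
          ⟨StructuredArrow.isoMk (Iso.refl _) (by
            change (f : b ⟶ p.obj e) ≫ p.map (𝟙 e) = f
            rw [p.map_id]
            exact Category.comp_id f)⟩⟩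

instance (b : B) : (toStr p b).IsEquivalence where

/-- `StructuredArrow star (map p)` has an initial object. -/
def starInitial :
    IsInitial (StructuredArrow.mk
      (show WithInitial.star ⟶ (WithInitial.map p).obj WithInitial.star from PUnit.unit)) where
  desc S := StructuredArrow.homMk
    (WithInitial.starInitial.to S.pt.right)
    (by
      cases S.pt.right <;> rfl)
  uniq S m _ := by
    apply StructuredArrow.ext
    exact WithInitial.starInitial.hom_ext _ _

end WithInitialAdjAux

/-- A functor `p : E ⥤ B` has a left adjoint if and only if the induced functor
`(1 < p) : (1 < E) ⥤ (1 < B)` between the categories obtained by freely adjoining an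
initial object has a left adjoint. -/
theorem leftAdjoint_iff_withInitial_leftAdjoint
    {E : Type u₁} [Category.{v₁} E] {B : Type u₂} [Category.{v₂} B] (p : E ⥤ B) :
    p.IsRightAdjoint ↔ (WithInitial.map p).IsRightAdjoint := by
  rw [isRightAdjoint_iff_hasInitial_structuredArrow,
    isRightAdjoint_iff_hasInitial_structuredArrow]
  constructor
  · intro h X
    cases X with
    | star => exact (WithInitialAdjAux.starInitial p).hasInitial
    | of b =>
      have := h b
      exact hasInitial_of_equivalence (WithInitialAdjAux.toStr p b).inv
  · intro h b
    have := h (WithInitial.of b)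
    exact hasInitial_of_equivalence (WithInitialAdjAux.toStr p b)
end

section
/- The join-with-a-point functor (1 < -) : Cat → Cat, which freely adjoins an initial object to a category, preserves pseudopullbacks (2-pullbacks): if E is a pseudopullback of a family of functors p_j : E_j → B, then (1 < E) is a pseudopullback of the induced functors (1 < p_j) : (1 < E_j) → (1 < B). -/
open CategoryTheory Limits

universe w v u v₂ u₂

variable {J : Type w} {Efam : J → Type u} [∀ j, Category.{v} (Efam j)]
  {B : Type u₂} [Category.{v₂} B]

/-- The standard model of the pseudopullback (2-pullback) of a family of functors
`p j : Efam j ⥤ B`: objects are cones of isomorphisms `{b ≅ p_j(e_j)}_j`. -/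
structure PsPb (Efam : J → Type u) [∀ j, Category.{v} (Efam j)]
    {B : Type u₂} [Category.{v₂} B] (p : ∀ j, Efam j ⥤ B) where
  base : B
  comp : ∀ j, Efam j
  iso : ∀ j, base ≅ (p j).obj (comp j)

namespace PsPb

variable {p : ∀ j, Efam j ⥤ B}

/-- Morphisms in the pseudopullback: componentwise morphisms commuting with the cones of
isomorphisms. -/
@[ext]
structure Hom (X Y : PsPb Efam p) where
  σ : X.base ⟶ Y.base
  τ : ∀ j, X.comp j ⟶ Y.comp j
  w : ∀ j, (X.iso j).hom ≫ (p j).map (τ j) = σ ≫ (Y.iso j).hom := by aesop_cat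

instance : Category (PsPb Efam p) where
  Hom := Hom
  id X := { σ := 𝟙 _, τ := fun _ => 𝟙 _ }
  comp f g :=
    { σ := f.σ ≫ g.σ
      τ := fun j => f.τ j ≫ g.τ j
      w := fun j => by
        rw [Functor.map_comp, ← Category.assoc, f.w j, Category.assoc, g.w j,
          ← Category.assoc] }
  id_comp f := by apply Hom.ext <;> simp
  comp_id f := by apply Hom.ext <;> simp
  assoc f g h := by apply Hom.ext <;> simp

/-- The canonical projection from the pseudopullback to the base. -/
def proj (Efam : J → Type u) [∀ j, Category.{v} (Efam j)] (p : ∀ j, Efam j ⥤ B) :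
    PsPb Efam p ⥤ B where
  obj X := X.base
  map f := f.σ
  map_id _ := rfl
  map_comp _ _ := rfl

/-- The canonical projection from the pseudopullback to the `j`-th component. -/
def projJ (Efam : J → Type u) [∀ j, Category.{v} (Efam j)] (p : ∀ j, Efam j ⥤ B)
    (j : J) : PsPb Efam p ⥤ Efam j where
  obj X := X.comp j
  map f := f.τ j
  map_id _ := rfl
  map_comp _ _ := rfl

end PsPb

namespace PsPbWithInitialAux

open WithInitial

lemma star_hom_ext {C : Type*} [Category C] {X : WithInitial C}
    (f g : (WithInitial.star : WithInitial C) ⟶ X) : f = g := by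
  cases X <;> rfl

instance subsingleton_hom_from_star {C : Type*} [Category C] (X : WithInitial C) :
    Subsingleton ((star : WithInitial C) ⟶ X) := by
  cases X <;> exact inferInstanceAs (Subsingleton PUnit)

variable {J : Type w} {Efam : J → Type u} [∀ j, Category.{v} (Efam j)]
  {B : Type u₂} [Category.{v₂} B]

variable (p : ∀ j, Efam j ⥤ B)

/-- The comparison functor. -/
def F : WithInitial (PsPb Efam p) ⥤
    PsPb (fun j => WithInitial (Efam j)) (fun j => WithInitial.map (p j)) where
  obj X := match X with
    | of X =>
      { base := of X.base
        comp := fun j => of (X.comp j)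
        iso := fun j => incl.mapIso (X.iso j) }
    | WithInitial.star =>
      { base := WithInitial.star
        comp := fun _ => WithInitial.star
        iso := fun _ => ⟨PUnit.unit, PUnit.unit, rfl, rfl⟩ }
  map {X Y} f := match X, Y, f with
    | of _, of _, f =>
      { σ := (down f).σ
        τ := fun j => (down f).τ j
        w := fun j => (down f).w j }
    | WithInitial.star, of _, _ =>
      { σ := PUnit.unit
        τ := fun _ => PUnit.unit
        w := fun _ => Subsingleton.elim _ _ }
    | WithInitial.star, WithInitial.star, _ =>
      { σ := PUnit.unit
        τ := fun _ => PUnit.unit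
        w := fun _ => rfl }
  map_id X := by cases X <;> rfl
  map_comp {X Y Z} f g := by
    cases X <;> cases Y <;> cases Z
    · rfl
    · exact g.elim
    · exact f.elim
    · exact f.elim
    · apply PsPb.Hom.ext
      · exact Subsingleton.elim _ _
      · funext j; exact Subsingleton.elim _ _
    · exact g.elim
    · apply PsPb.Hom.ext
      · exact Subsingleton.elim _ _
      · funext j; exact Subsingleton.elim _ _
    · rfl

instance : (F p).Faithful where
  map_injective {X Y} f g h := by
    match X, Y with
    | WithInitial.of X, WithInitial.of Y =>
      apply PsPb.Hom.ext
      · have h' := congrArg PsPb.Hom.σ h; exact h'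
      · have h' := congrArg PsPb.Hom.τ h; exact h' 
    | WithInitial.of X, WithInitial.star => exact f.elim
    | WithInitial.star, _ => exact Subsingleton.elim f g

instance : (F p).Full where
  map_surjective {X Y} f := by
    match X, Y with
    | WithInitial.of X, WithInitial.of Y =>
      exact ⟨(⟨f.σ, f.τ, f.w⟩ : X ⟶ Y), by apply PsPb.Hom.ext <;> rfl⟩
    | WithInitial.of X, WithInitial.star => exact PEmpty.elim f.σ
    | WithInitial.star, WithInitial.of Y =>
      refine ⟨PUnit.unit, ?_⟩
      apply PsPb.Hom.ext
      · exact star_hom_ext _ _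
      · funext j; exact star_hom_ext _ _
    | WithInitial.star, WithInitial.star =>
      refine ⟨PUnit.unit, ?_⟩
      apply PsPb.Hom.ext
      · exact star_hom_ext _ _
      · funext j; exact star_hom_ext _ _

instance : (F p).EssSurj where
  mem_essImage Y := by
    obtain ⟨base, comp, iso⟩ := Y
    cases base with
    | star =>
      have hc : ∀ j, comp j = star := by
        intro j
        cases hcj : comp j with
        | star => rfl
        | of e =>
          have f := (iso j).inv
          rw [hcj] at f
          exact f.elim
      have hcomp : comp = fun _ => WithInitial.star := funext hc
      subst hcomp
      have hiso : iso = fun _ => ⟨PUnit.unit, PUnit.unit, rfl, rfl⟩ := by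
        funext j; apply Iso.ext; exact Subsingleton.elim _ _
      subst hiso
      exact ⟨WithInitial.star, ⟨Iso.refl _⟩⟩
    | of b =>
      have hc : ∀ j, ∃ e, comp j = of e := by
        intro j
        cases hcj : comp j with
        | of e => exact ⟨e, rfl⟩
        | star =>
          have f := (iso j).hom
          rw [hcj] at f
          exact f.elim
      choose e he using hc
      have hcomp : comp = fun j => of (e j) := funext he
      subst hcomp
      refine ⟨of ⟨b, e, fun j => incl.preimageIso (iso j)⟩, ⟨eqToIso ?_⟩⟩
      show ({ base := of b, comp := fun j => of (e j),
              iso := fun j => incl.mapIso (incl.preimageIso (iso j)) } :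
          PsPb (fun j => WithInitial (Efam j)) (fun j => WithInitial.map (p j))) = _
      congr 1
      funext j
      exact Iso.ext (incl.map_preimage _)

/-- Compatibility with the `j`-th projection. -/
def projJIso (j : J) :
    F p ⋙ PsPb.projJ (fun j => WithInitial (Efam j)) (fun j => WithInitial.map (p j)) j ≅
      WithInitial.map (PsPb.projJ Efam p j) :=
  NatIso.ofComponents
    (fun X => match X with
      | of _ => Iso.refl _
      | WithInitial.star => Iso.refl _)
    (by
      intro X Y f
      match X, Y, f with
      | of X, of Y, f => exact (Category.comp_id _).trans (Category.id_comp _).symm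
      | WithInitial.star, of Y, _ => exact star_hom_ext _ _
      | WithInitial.star, WithInitial.star, _ => rfl)

end PsPbWithInitialAux

/-- The join-with-a-point functor `(1 < -)` preserves pseudopullbacks: freely adjoining an
initial object to the pseudopullback of a family `p j : Efam j ⥤ B` yields a pseudopullback
of the induced family `(1 < p j) : (1 < Efam j) ⥤ (1 < B)`, compatibly with the canonical
projections. -/
theorem withInitial_preserves_pseudopullback
    {J : Type w} (Efam : J → Type u) [∀ j, Category.{v} (Efam j)]
    {B : Type u₂} [Category.{v₂} B] (p : ∀ j, Efam j ⥤ B) :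
    ∃ e : WithInitial (PsPb Efam p) ≌
        PsPb (fun j => WithInitial (Efam j)) (fun j => WithInitial.map (p j)),
      ∀ j : J, Nonempty
        (e.functor ⋙ PsPb.projJ (fun j => WithInitial (Efam j))
            (fun j => WithInitial.map (p j)) j ≅
          WithInitial.map (PsPb.projJ Efam p j)) := by
  haveI : (PsPbWithInitialAux.F p).IsEquivalence := { }
  exact ⟨(PsPbWithInitialAux.F p).asEquivalence,
    fun j => ⟨PsPbWithInitialAux.projJIso p j⟩⟩
end

section
/- Let p : E → B be a functor with left adjoint Γ : B → E. Given a pushout diagram Γc ← Γb → e in E whose left leg is Γf for f : b → c and whose right leg σ : Γb → e has adjoint transpose σ̄ : b → p(e), let ε : p(e) → c ∪^b p(e) be the canonical map into the pushout of c ← b → p(e) in B. Then the canonical map e → Γc ∪^{Γb} e into the pushout in E is a displacement of e along ε; in particular ∇_ε(e) ≅ Γc ∪^{Γb} e. -/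
open CategoryTheory Limits

universe v₁ v₂ u₁ u₂

/-- A *displacement* of `e` along `ε : p(e) ⟶ b`: an object `η : e ⟶ obj` of the coslice
`(e ↓ E)` together with a universal map `u : b ⟶ p(obj)` through which `p η` factors,
corepresenting the functor `(e ↓ E) → Set`, `h ↦ Hom_{(p(e) ↓ B)}(ε, p h)`
(i.e. an adjoint transpose of `ε` through the induced functor on coslices). -/
structure Displacement {E : Type u₁} [Category.{v₁} E] {B : Type u₂} [Category.{v₂} B]
    (p : E ⥤ B) (e : E) {b : B} (ε : p.obj e ⟶ b) where
  /-- the displaced object `∇_ε(e)` -/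
  obj : E
  /-- the displacement map `e ⟶ ∇_ε(e)` -/
  η : e ⟶ obj
  /-- the universal map `b ⟶ p(∇_ε(e))` -/
  u : b ⟶ p.obj obj
  fac : p.map η = ε ≫ u
  corep : ∀ {e' : E} (h : e ⟶ e') (q : b ⟶ p.obj e'), p.map h = ε ≫ q →
    ∃! ξ : obj ⟶ e', η ≫ ξ = h ∧ u ≫ p.map ξ = q

/-- **Pushouts along a left adjoint are displacements.** Let `Γ ⊣ p` be an adjunction,
`f : b ⟶ c` in `B` and `σ : Γ b ⟶ e` in `E` with adjoint transpose `σ̄ : b ⟶ p e`. Given a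
pushout square for `(Γ f, σ)` in `E` with legs `θ : Γ c ⟶ P`, `η : e ⟶ P`, and a pushout
square for `(f, σ̄)` in `B` with legs `tc : c ⟶ Q`, `ε : p e ⟶ Q`, the map `η : e ⟶ P`
is a displacement of `e` along `ε`; in particular `∇_ε(e) ≅ Γc ∪^{Γb} e`. -/
theorem pushout_is_displacement
    {E : Type u₁} [Category.{v₁} E] {B : Type u₂} [Category.{v₂} B]
    (p : E ⥤ B) (Γ : B ⥤ E) (adj : Γ ⊣ p)
    {b c : B} (f : b ⟶ c) {e : E} (σ : Γ.obj b ⟶ e)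
    {P : E} {θ : Γ.obj c ⟶ P} {η : e ⟶ P}
    (hE : IsPushout (Γ.map f) σ θ η)
    {Q : B} {tc : c ⟶ Q} {ε : p.obj e ⟶ Q}
    (hB : IsPushout f (adj.homEquiv b e σ) tc ε) :
    ∃ (d : Displacement p e ε) (hobj : d.obj = P), d.η ≫ eqToHom hobj = η := by
  -- transpose of θ
  have hw : f ≫ adj.homEquiv c P θ = adj.homEquiv b e σ ≫ p.map η := by
    rw [← adj.homEquiv_naturality_left, ← adj.homEquiv_naturality_right, hE.w]
  set u : Q ⟶ p.obj P := hB.desc (adj.homEquiv c P θ) (p.map η) hw with hu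
  have htc : tc ≫ u = adj.homEquiv c P θ := hB.inl_desc _ _ _
  have hε : ε ≫ u = p.map η := hB.inr_desc _ _ _
  refine ⟨⟨P, η, u, hε.symm, ?_⟩, rfl, by simp⟩
  intro e' h q hq
  have hw2 : Γ.map f ≫ (adj.homEquiv c e').symm (tc ≫ q) = σ ≫ h := by
    apply (adj.homEquiv _ _).injective
    rw [adj.homEquiv_naturality_left, adj.homEquiv_naturality_right,
      Equiv.apply_symm_apply, ← Category.assoc, hB.w, Category.assoc, ← hq]
  refine ⟨hE.desc ((adj.homEquiv c e').symm (tc ≫ q)) h hw2, ⟨hE.inr_desc _ _ _, ?_⟩, ?_⟩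
  · apply hB.hom_ext
    · rw [← Category.assoc, htc, ← adj.homEquiv_naturality_right, hE.inl_desc,
        Equiv.apply_symm_apply]
    · rw [← Category.assoc, hε, ← p.map_comp, hE.inr_desc, hq]
  · rintro ξ' ⟨h1, h2⟩
    apply hE.hom_ext
    · rw [hE.inl_desc]
      apply (adj.homEquiv _ _).injective
      rw [adj.homEquiv_naturality_right, Equiv.apply_symm_apply, ← htc,
        Category.assoc, h2]
    · rw [hE.inr_desc, h1]
end
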